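/- For k ≥ 2, the number of independent k-subsets of the h-th power of a cycle on n vertices equals (n/k) * C(n - h*k - 1, k - 1). -/

import Mathlib

/-- Independent subsets of the h-th power of the path on n vertices:
subsets of {1,...,n} with all pairwise differences of distinct elements greater than h. -/
def pathSubsets (n h : ℕ) : Finset (Finset ℕ) :=
  (Finset.Icc 1 n).powerset.filter (fun S => ∀ i ∈ S, ∀ j ∈ S, i < j → i + h < j)

def pathCount (n h k : ℕ) : ℕ := ((pathSubsets n h).filter (fun S => S.card = k)).card

def pathTotal (n h : ℕ) : ℕ := (pathSubsets n h).card

/-- Independent subsets of the h-th power of the cycle on n vertices: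
subsets S of {1,...,n} with h < |i-j| < n-h for all distinct i,j ∈ S. -/
def cycleSubsets (n h : ℕ) : Finset (Finset ℕ) :=
  (Finset.Icc 1 n).powerset.filter
    (fun S => ∀ i ∈ S, ∀ j ∈ S, i < j → i + h < j ∧ j + h < n + i)

def cycleCount (n h k : ℕ) : ℕ := ((cycleSubsets n h).filter (fun S => S.card = k)).card

def cycleTotal (n h : ℕ) : ℕ := (cycleSubsets n h).card

/-- Number of edges of the Hasse diagram of independent subsets of Pₙ⁽ʰ⁾ ordered by inclusion. -/
def pathEdges (n h : ℕ) : ℕ :=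
  (((pathSubsets n h) ×ˢ (pathSubsets n h)).filter
    (fun p => p.1 ⊆ p.2 ∧ p.2.card = p.1.card + 1)).card

/-- Number of edges of the Hasse diagram of independent subsets of Cₙ⁽ʰ⁾ ordered by inclusion. -/
def cycleEdges (n h : ℕ) : ℕ :=
  (((cycleSubsets n h) ×ˢ (cycleSubsets n h)).filter
    (fun p => p.1 ⊆ p.2 ∧ p.2.card = p.1.card + 1)).card

/-!
Double count the pairs (S, v) with v ∈ S. Measuring positions as cyclic distance from v,
minus h, turns S \ {v} into an h-sparse (k-1)-subset of {1, …, n-2h-1}, and this is a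
bijection; hence k · c(n, k) = n · p(n-2h-1, k-1), where c(n, k) counts the independent
k-subsets of the cycle and p(m, k) the h-sparse k-subsets of {1, …, m}. Splitting on
whether m + 1 ∈ S gives p(m+1, k+1) = p(m, k+1) + p(m-h, k), which is Pascal's rule for
p(m, k) = C(m - h(k-1), k).
-/

open Finset

lemma mem_pathSubsets {m h : ℕ} {S : Finset ℕ} :
    S ∈ pathSubsets m h ↔ S ⊆ Icc 1 m ∧ ∀ i ∈ S, ∀ j ∈ S, i < j → i + h < j := by
  simp [pathSubsets]

lemma mem_cycleSubsets {n h : ℕ} {S : Finset ℕ} :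
    S ∈ cycleSubsets n h ↔
      S ⊆ Icc 1 n ∧ ∀ i ∈ S, ∀ j ∈ S, i < j → i + h < j ∧ j + h < n + i := by
  simp [cycleSubsets]

section PathCount

variable {m h : ℕ}

lemma pathCount_zero_right (m h : ℕ) : pathCount m h 0 = 1 := by
  rw [pathCount, card_eq_one]
  refine ⟨∅, eq_singleton_iff_unique_mem.mpr ⟨?_, fun S hS => card_eq_zero.mp (mem_filter.mp hS).2⟩⟩
  simp [mem_filter, mem_pathSubsets]

lemma pathCount_zero_succ (h k : ℕ) : pathCount 0 h (k + 1) = 0 := by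
  rw [pathCount, card_eq_zero, filter_eq_empty_iff]
  intro S hS hcard
  have : S = ∅ := subset_empty.mp (by simpa using (mem_pathSubsets.mp hS).1)
  simp [this] at hcard

lemma erase_mem_pathSubsets_iff {S : Finset ℕ} (hS : m + 1 ∈ S) :
    S.erase (m + 1) ∈ pathSubsets (m - h) h ↔ S ∈ pathSubsets (m + 1) h := by
  simp only [mem_pathSubsets, subset_iff, mem_erase, mem_Icc]
  constructor
  · rintro ⟨hsub, hsep⟩
    have hmem : ∀ x ∈ S, 1 ≤ x ∧ x ≤ m + 1 := fun x hx => by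
      rcases eq_or_ne x (m + 1) with rfl | hne
      · omega
      · have := hsub ⟨hne, hx⟩; omega
    refine ⟨hmem, fun i hi j hj hij => ?_⟩
    have hi' := hsub ⟨by have := hmem j hj; omega, hi⟩
    rcases eq_or_ne j (m + 1) with rfl | hj'
    · omega
    · exact hsep i ⟨by omega, hi⟩ j ⟨hj', hj⟩ hij
  · rintro ⟨hsub, hsep⟩
    refine ⟨fun x ⟨hne, hx⟩ => ?_, fun i ⟨_, hi⟩ j ⟨_, hj⟩ hij => hsep i hi j hj hij⟩
    have := hsub hx
    have := hsep x hx (m + 1) hS (by omega)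
    omega

lemma notMem_of_mem_pathSubsets {S : Finset ℕ} {x : ℕ} (hS : S ∈ pathSubsets m h) (hx : m < x) :
    x ∉ S := fun hxS => by
  have := mem_Icc.mp ((mem_pathSubsets.mp hS).1 hxS)
  omega

lemma card_filter_notMem_pathSubsets_succ (m h k : ℕ) :
    #{S ∈ {S ∈ pathSubsets (m + 1) h | #S = k} | m + 1 ∉ S} = pathCount m h k := by
  rw [pathCount]
  congr 1
  ext S
  simp only [mem_filter, mem_pathSubsets, subset_iff, mem_Icc]
  constructor
  · rintro ⟨⟨⟨hsub, hsep⟩, hcard⟩, hm⟩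
    refine ⟨⟨fun x hx => ?_, hsep⟩, hcard⟩
    have := hsub hx
    have : x ≠ m + 1 := fun hx' => hm (hx' ▸ hx)
    omega
  · rintro ⟨⟨hsub, hsep⟩, hcard⟩
    exact ⟨⟨⟨fun x hx => ⟨(hsub hx).1, by have := hsub hx; omega⟩, hsep⟩, hcard⟩,
      fun hm => by have := hsub hm; omega⟩

lemma card_filter_mem_pathSubsets_succ (m h k : ℕ) :
    #{S ∈ {S ∈ pathSubsets (m + 1) h | #S = k + 1} | m + 1 ∈ S} = pathCount (m - h) h k := by
  apply card_nbij' (·.erase (m + 1)) (insert (m + 1))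
  · intro S hS
    simp only [coe_filter, Set.mem_ofPred_eq, mem_filter] at hS ⊢
    obtain ⟨⟨hS, hcard⟩, hm⟩ := hS
    exact ⟨(erase_mem_pathSubsets_iff hm).mpr hS, by rw [card_erase_of_mem hm, hcard]; rfl⟩
  · intro T hT
    simp only [coe_filter, Set.mem_ofPred_eq, mem_filter] at hT ⊢
    obtain ⟨hT, hcard⟩ := hT
    have hm : m + 1 ∉ T := notMem_of_mem_pathSubsets hT (by omega)
    refine ⟨⟨(erase_mem_pathSubsets_iff (mem_insert_self _ _)).mp ?_, ?_⟩, mem_insert_self _ _⟩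
    · rwa [erase_insert hm]
    · rw [card_insert_of_notMem hm, hcard]
  · intro S hS
    simp only [coe_filter, Set.mem_ofPred_eq, mem_filter] at hS
    exact insert_erase hS.2
  · intro T hT
    simp only [coe_filter, Set.mem_ofPred_eq] at hT
    exact erase_insert (notMem_of_mem_pathSubsets hT.1 (by omega))

lemma pathCount_succ_succ (m h k : ℕ) :
    pathCount (m + 1) h (k + 1) = pathCount m h (k + 1) + pathCount (m - h) h k := by
  rw [pathCount, ← card_filter_add_card_filter_not (m + 1 ∈ ·),
    card_filter_mem_pathSubsets_succ, card_filter_notMem_pathSubsets_succ, add_comm]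

theorem pathCount_eq_choose (m h k : ℕ) : pathCount m h k = (m - h * (k - 1)).choose k := by
  induction m using Nat.strong_induction_on generalizing k with
  | _ m ih =>
  rcases k with _ | k
  · simp [pathCount_zero_right]
  rcases m with _ | m
  · simp [pathCount_zero_succ]
  rw [pathCount_succ_succ, ih m (by omega), ih (m - h) (by omega), Nat.add_sub_cancel]
  rcases k with _ | k
  · simp
  rw [Nat.add_sub_cancel, Nat.sub_sub, show h + h * k = h * (k + 1) by ring]
  by_cases hle : h * (k + 1) ≤ m
  · rw [show m + 1 - h * (k + 1) = m - h * (k + 1) + 1 by omega, Nat.choose_succ_succ', add_comm]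
  · simp [show m - h * (k + 1) = 0 by omega, show m + 1 - h * (k + 1) = 0 by omega]

end PathCount

section Rotation

/-- The number of forward steps from `v` to `u` on the cycle `1, …, n`, a value in `[0, n)`;
`cyclicAdd n v` inverts it. -/
def cyclicSub (n u v : ℕ) : ℕ := if u < v then u + n - v else u - v

def cyclicAdd (n v t : ℕ) : ℕ := if v + t ≤ n then v + t else v + t - n

variable {n h u u' v t : ℕ} {S T : Finset ℕ}

lemma cyclicAdd_cyclicSub (hu : u ∈ Icc 1 n) (hv : v ∈ Icc 1 n) :
    cyclicAdd n v (cyclicSub n u v) = u := by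
  simp only [mem_Icc, cyclicAdd, cyclicSub] at *
  split_ifs <;> omega

lemma cyclicSub_cyclicAdd (hv : v ∈ Icc 1 n) (ht : t < n) :
    cyclicSub n (cyclicAdd n v t) v = t := by
  simp only [mem_Icc, cyclicAdd, cyclicSub] at *
  split_ifs <;> omega

lemma cyclicAdd_mem_Icc (hv : v ∈ Icc 1 n) (ht : t < n) : cyclicAdd n v t ∈ Icc 1 n := by
  simp only [mem_Icc, cyclicAdd] at *
  split_ifs <;> omega

lemma sep_of_mem_cycleSubsets (hS : S ∈ cycleSubsets n h) (hu : u ∈ S) (hv : v ∈ S) (hne : u ≠ v) :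
    u + h < v ∧ v + h < n + u ∨ v + h < u ∧ u + h < n + v := by
  have hsep := (mem_cycleSubsets.mp hS).2
  rcases Nat.lt_or_gt_of_ne hne with huv | hvu
  · exact .inl (hsep u hu v hv huv)
  · exact .inr (hsep v hv u hu hvu)

lemma cyclicSub_bounds (hS : S ∈ cycleSubsets n h) (hu : u ∈ S) (hv : v ∈ S) (hne : u ≠ v) :
    h < cyclicSub n u v ∧ cyclicSub n u v + h < n := by
  have := sep_of_mem_cycleSubsets hS hu hv hne
  simp only [cyclicSub]
  split_ifs <;> omega

lemma cyclicSub_add_lt (hS : S ∈ cycleSubsets n h) (hu : u ∈ S) (hu' : u' ∈ S) (hv : v ∈ S)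
    (hne : u ≠ v) (hne' : u' ≠ v) (hlt : cyclicSub n u v < cyclicSub n u' v) :
    cyclicSub n u v + h < cyclicSub n u' v := by
  have huu' : u ≠ u' := by rintro rfl; exact hlt.false
  have := sep_of_mem_cycleSubsets hS hu hu' huu'
  have := sep_of_mem_cycleSubsets hS hu hv hne
  have := sep_of_mem_cycleSubsets hS hu' hv hne'
  simp only [cyclicSub] at *
  split_ifs at * <;> omega

lemma image_cyclicSub_mem_pathSubsets (hS : S ∈ cycleSubsets n h) (hv : v ∈ S) :
    (S.erase v).image (fun u => cyclicSub n u v - h) ∈ pathSubsets (n - 2 * h - 1) h := by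
  rw [mem_pathSubsets]
  refine ⟨fun t ht => ?_, ?_⟩
  · obtain ⟨u, hu, rfl⟩ := mem_image.mp ht
    have := cyclicSub_bounds hS (mem_of_mem_erase hu) hv (ne_of_mem_erase hu)
    rw [mem_Icc]
    omega
  · simp only [mem_image, mem_erase]
    rintro _ ⟨u, ⟨hne, hu⟩, rfl⟩ _ ⟨u', ⟨hne', hu'⟩, rfl⟩ hlt
    have := cyclicSub_bounds hS hu hv hne
    have := cyclicSub_add_lt hS hu hu' hv hne hne' (by omega)
    omega

lemma leftInvOn_cyclicSub (hS : S ∈ cycleSubsets n h) (hv : v ∈ S) :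
    Set.LeftInvOn (fun t => cyclicAdd n v (t + h)) (fun u => cyclicSub n u v - h) (S.erase v) := by
  intro u hu
  have hu := mem_coe.mp hu
  have hsub := (mem_cycleSubsets.mp hS).1
  have := cyclicSub_bounds hS (mem_of_mem_erase hu) hv (ne_of_mem_erase hu)
  simp only
  rw [Nat.sub_add_cancel this.1.le, cyclicAdd_cyclicSub (hsub (mem_of_mem_erase hu)) (hsub hv)]

lemma leftInvOn_cyclicAdd (hv : v ∈ Icc 1 n) (hT : T ∈ pathSubsets (n - 2 * h - 1) h) :
    Set.LeftInvOn (fun u => cyclicSub n u v - h) (fun t => cyclicAdd n v (t + h)) T := by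
  intro t ht
  have := mem_Icc.mp ((mem_pathSubsets.mp hT).1 (mem_coe.mp ht))
  simp only
  rw [cyclicSub_cyclicAdd hv (by omega), Nat.add_sub_cancel]

lemma insert_image_cyclicAdd_mem_cycleSubsets (hv : v ∈ Icc 1 n)
    (hT : T ∈ pathSubsets (n - 2 * h - 1) h) :
    insert v (T.image fun t => cyclicAdd n v (t + h)) ∈ cycleSubsets n h := by
  obtain ⟨hsub, hsep⟩ := mem_pathSubsets.mp hT
  have hbound : ∀ t ∈ T, 1 ≤ t ∧ t + 2 * h + 1 ≤ n := fun t ht => by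
    have := mem_Icc.mp (hsub ht); omega
  have hv' := mem_Icc.mp hv
  rw [mem_cycleSubsets]
  refine ⟨insert_subset hv fun x hx => ?_, ?_⟩
  · obtain ⟨t, ht, rfl⟩ := mem_image.mp hx
    exact cyclicAdd_mem_Icc hv (by have := hbound t ht; omega)
  · simp only [mem_insert, mem_image]
    rintro i (rfl | ⟨t, ht, rfl⟩) j (rfl | ⟨t', ht', rfl⟩) hij
    · omega
    · have := hbound t' ht'
      simp only [cyclicAdd] at *
      split_ifs at * <;> omega
    · have := hbound t ht
      simp only [cyclicAdd] at *
      split_ifs at * <;> omega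
    · have := hbound t ht
      have := hbound t' ht'
      rcases lt_trichotomy t t' with htt' | rfl | htt'
      · have := hsep t ht t' ht' htt'
        simp only [cyclicAdd] at *
        split_ifs at * <;> omega
      · omega
      · have := hsep t' ht' t ht htt'
        simp only [cyclicAdd] at *
        split_ifs at * <;> omega

lemma notMem_image_cyclicAdd (hv : v ∈ Icc 1 n) (hT : T ∈ pathSubsets (n - 2 * h - 1) h) :
    v ∉ T.image fun t => cyclicAdd n v (t + h) := by
  rintro hvT
  obtain ⟨t, ht, hvt⟩ := mem_image.mp hvT
  have hinv := leftInvOn_cyclicAdd hv hT (mem_coe.mpr ht)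
  have := mem_Icc.mp ((mem_pathSubsets.mp hT).1 ht)
  simp only [hvt, cyclicSub, lt_irrefl, if_false, Nat.sub_self, Nat.zero_sub] at hinv
  omega

end Rotation

theorem card_filter_mem_cycleSubsets {n h v : ℕ} (hv : v ∈ Icc 1 n) (k : ℕ) :
    #{S ∈ {S ∈ cycleSubsets n h | #S = k + 1} | v ∈ S} = pathCount (n - 2 * h - 1) h k := by
  apply card_nbij' (fun S => (S.erase v).image fun u => cyclicSub n u v - h)
    (fun T => insert v (T.image fun t => cyclicAdd n v (t + h)))
  · intro S hS
    simp only [coe_filter, Set.mem_ofPred_eq, mem_filter] at hS ⊢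
    obtain ⟨⟨hS, hcard⟩, hvS⟩ := hS
    refine ⟨image_cyclicSub_mem_pathSubsets hS hvS, ?_⟩
    rw [card_image_of_injOn (leftInvOn_cyclicSub hS hvS).injOn, card_erase_of_mem hvS, hcard,
      Nat.add_sub_cancel]
  · intro T hT
    simp only [coe_filter, Set.mem_ofPred_eq, mem_filter] at hT ⊢
    obtain ⟨hT, hcard⟩ := hT
    have hvT := notMem_image_cyclicAdd hv hT
    refine ⟨⟨insert_image_cyclicAdd_mem_cycleSubsets hv hT, ?_⟩, mem_insert_self _ _⟩
    rw [card_insert_of_notMem hvT, card_image_of_injOn (leftInvOn_cyclicAdd hv hT).injOn, hcard]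
  · intro S hS
    simp only [coe_filter, Set.mem_ofPred_eq, mem_filter] at hS
    obtain ⟨⟨hS, -⟩, hvS⟩ := hS
    simp only
    rw [image_image, (image_congr (leftInvOn_cyclicSub hS hvS).eqOn).trans image_id,
      insert_erase hvS]
  · intro T hT
    simp only [coe_filter, Set.mem_ofPred_eq] at hT
    simp only
    rw [erase_insert (notMem_image_cyclicAdd hv hT.1), image_image]
    exact (image_congr (leftInvOn_cyclicAdd hv hT.1).eqOn).trans image_id

theorem succ_mul_cycleCount (n h k : ℕ) :
    (k + 1) * cycleCount n h (k + 1) = n * pathCount (n - 2 * h - 1) h k := by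
  have hsum := sum_card_inter (s := Icc 1 n) (B := {S ∈ cycleSubsets n h | #S = k + 1})
    fun v hv => card_filter_mem_cycleSubsets (h := h) hv k
  have hinter : ∀ S ∈ {S ∈ cycleSubsets n h | #S = k + 1}, #(Icc 1 n ∩ S) = k + 1 := by
    intro S hS
    obtain ⟨hS, hcard⟩ := mem_filter.mp hS
    rw [inter_eq_right.mpr (mem_cycleSubsets.mp hS).1, hcard]
  rwa [sum_congr rfl hinter, sum_const, smul_eq_mul, Nat.card_Icc, Nat.add_sub_cancel,
    mul_comm] at hsum

theorem stmt13 (n h k : ℕ) (hk : 2 ≤ k) :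
    k * cycleCount n h k = n * Nat.choose (n - h * k - 1) (k - 1) := by
  obtain ⟨k, rfl⟩ : ∃ j, k = j + 2 := ⟨k - 2, by omega⟩
  rw [succ_mul_cycleCount, pathCount_eq_choose]
  congr 2
  rw [Nat.add_sub_cancel, Nat.sub_sub, Nat.sub_sub, Nat.sub_sub]
  ring_nf
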